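/- Let φ be an AM-chain-homotopy for a chain complex C of ℤ-modules, let π be the associated family of maps, and let M be the subcomplex of C with M_q = im π_q and differential the restriction of ∂. Then for every q, the q-th cohomology of the cochain complex Hom_ℤ(C,ℤ) is isomorphic to the q-th cohomology of Hom_ℤ(M,ℤ). -/

import Mathlib

/-!
The projection `π = id - (φ∂ + ∂φ)` is a chain map that is chain homotopic to the identity, and the
AM-identities make it idempotent. Hence the inclusion `ι : M → C` and the corestriction
`p : C → M` of `π` satisfy `p ∘ ι = id` and `ι ∘ p = π ≃ id`, so on the cohomology of the dual
complexes they induce mutually inverse maps.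
-/

attribute [local instance 2000] Submodule.module

/-- The `q`-cocycles of the cochain complex `Hom_ℤ(D, ℤ)` of a chain complex `D` with
differentials `dD n : D (n+1) → D n`: the kernel of the codifferential
`δ^q = (dD q).dualMap`, `δ^q(c) = c ∘ ∂_{q+1}`. -/
def cocyc (D : ℕ → Type*) [∀ n, AddCommGroup (D n)] [∀ n, Module ℤ (D n)]
    (dD : ∀ n, D (n + 1) →ₗ[ℤ] D n) (q : ℕ) : Submodule ℤ (Module.Dual ℤ (D q)) :=
  LinearMap.ker (dD q).dualMap

/-- The `q`-coboundaries of the cochain complex `Hom_ℤ(D, ℤ)`: the image of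
`δ^{q-1}` (which is `0` for `q = 0`). -/
def cobnd (D : ℕ → Type*) [∀ n, AddCommGroup (D n)] [∀ n, Module ℤ (D n)]
    (dD : ∀ n, D (n + 1) →ₗ[ℤ] D n) : ∀ q, Submodule ℤ (Module.Dual ℤ (D q))
  | 0 => ⊥
  | (q + 1) => LinearMap.range (dD q).dualMap

section DualCohomology

variable {D : ℕ → Type*} [∀ n, AddCommGroup (D n)] [∀ n, Module ℤ (D n)]
  {D' : ℕ → Type*} [∀ n, AddCommGroup (D' n)] [∀ n, Module ℤ (D' n)]
  {D'' : ℕ → Type*} [∀ n, AddCommGroup (D'' n)] [∀ n, Module ℤ (D'' n)]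
  {dD : ∀ n, D (n + 1) →ₗ[ℤ] D n} {dD' : ∀ n, D' (n + 1) →ₗ[ℤ] D' n}
  {dD'' : ∀ n, D'' (n + 1) →ₗ[ℤ] D'' n}

abbrev DualCohomology (D : ℕ → Type*) [∀ n, AddCommGroup (D n)] [∀ n, Module ℤ (D n)]
    (dD : ∀ n, D (n + 1) →ₗ[ℤ] D n) (q : ℕ) : Type _ :=
  ↥(cocyc D dD q) ⧸ (cobnd D dD q).comap (cocyc D dD q).subtype

variable (dD dD') in
def IsChainMap (f : ∀ n, D n →ₗ[ℤ] D' n) : Prop :=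
  ∀ n, (f n).comp (dD n) = (dD' n).comp (f (n + 1))

theorem isChainMap_id : IsChainMap dD dD fun _ => LinearMap.id :=
  fun n => by rw [LinearMap.id_comp, LinearMap.comp_id]

namespace IsChainMap

variable {f : ∀ n, D n →ₗ[ℤ] D' n}

theorem dualMap_mem_cocyc (hf : IsChainMap dD dD' f) {q : ℕ} {c : Module.Dual ℤ (D' q)}
    (hc : c ∈ cocyc D' dD' q) : (f q).dualMap c ∈ cocyc D dD q := by
  rw [cocyc, LinearMap.mem_ker, LinearMap.dualMap_apply'] at hc ⊢
  rw [LinearMap.dualMap_apply', LinearMap.comp_assoc, hf q, ← LinearMap.comp_assoc, hc,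
    LinearMap.zero_comp]

theorem dualMap_mem_cobnd (hf : IsChainMap dD dD' f) {q : ℕ} {c : Module.Dual ℤ (D' q)}
    (hc : c ∈ cobnd D' dD' q) : (f q).dualMap c ∈ cobnd D dD q := by
  cases q with
  | zero =>
    rw [cobnd, Submodule.mem_bot] at hc ⊢
    rw [hc, map_zero]
  | succ n =>
    obtain ⟨b, rfl⟩ := hc
    refine ⟨(f n).dualMap b, ?_⟩
    simp only [LinearMap.dualMap_apply', LinearMap.comp_assoc, hf n]

end IsChainMap

def cohomMap (f : ∀ n, D n →ₗ[ℤ] D' n) (hf : IsChainMap dD dD' f) (q : ℕ) :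
    DualCohomology D' dD' q →ₗ[ℤ] DualCohomology D dD q :=
  Submodule.mapQ _ _ ((f q).dualMap.restrict fun _ => hf.dualMap_mem_cocyc)
    fun _ => hf.dualMap_mem_cobnd

@[simp]
theorem cohomMap_mk (f : ∀ n, D n →ₗ[ℤ] D' n) (hf : IsChainMap dD dD' f) (q : ℕ)
    (c : cocyc D' dD' q) :
    cohomMap f hf q (Submodule.Quotient.mk c) =
      Submodule.Quotient.mk ⟨(f q).dualMap c, hf.dualMap_mem_cocyc c.2⟩ :=
  rfl

theorem cohomMap_comp {f : ∀ n, D n →ₗ[ℤ] D' n} {g : ∀ n, D' n →ₗ[ℤ] D'' n}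
    {k : ∀ n, D n →ₗ[ℤ] D'' n} (hf : IsChainMap dD dD' f) (hg : IsChainMap dD' dD'' g)
    (hk : IsChainMap dD dD'' k) (hgf : ∀ n, (g n).comp (f n) = k n) (q : ℕ) :
    (cohomMap f hf q).comp (cohomMap g hg q) = cohomMap k hk q := by
  ext c
  simp only [LinearMap.coe_comp, Function.comp_apply, Submodule.mkQ_apply, cohomMap_mk, ← hgf q]
  rfl

theorem cohomMap_id (q : ℕ) :
    cohomMap (fun _ => LinearMap.id) (isChainMap_id (dD := dD)) q = LinearMap.id := by
  ext c
  rfl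

variable (dD) in
def IsHomotopyToId (f : ∀ n, D n →ₗ[ℤ] D n) (h : ∀ n, D n →ₗ[ℤ] D (n + 1)) : Prop :=
  f 0 = LinearMap.id - (dD 0).comp (h 0) ∧
    ∀ n, f (n + 1) = LinearMap.id - (h n).comp (dD n) - (dD (n + 1)).comp (h (n + 1))

namespace IsHomotopyToId

variable {f : ∀ n, D n →ₗ[ℤ] D n} {h : ∀ n, D n →ₗ[ℤ] D (n + 1)}

theorem isChainMap (hfh : IsHomotopyToId dD f h) (hdd : ∀ n, (dD n).comp (dD (n + 1)) = 0) :
    IsChainMap dD dD f := by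
  have hdd' n x : dD n (dD (n + 1) x) = 0 := LinearMap.congr_fun (hdd n) x
  intro n
  ext x
  cases n with
  | zero => simp [hfh.1, hfh.2, hdd']
  | succ n => simp [hfh.2, hdd']

theorem dualMap_sub_mem_cobnd (hfh : IsHomotopyToId dD f h) {q : ℕ} {c : Module.Dual ℤ (D q)}
    (hc : c ∈ cocyc D dD q) :
    (f q).dualMap c - c ∈ cobnd D dD q := by
  rw [cocyc, LinearMap.mem_ker, LinearMap.dualMap_apply'] at hc
  cases q with
  | zero =>
    rw [cobnd, Submodule.mem_bot, LinearMap.dualMap_apply', hfh.1, LinearMap.comp_sub,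
      LinearMap.comp_id, ← LinearMap.comp_assoc, hc, LinearMap.zero_comp, sub_zero, sub_self]
  | succ n =>
    -- `c ∘ ∂ = 0` kills the `∂ h` part of `id - f`, leaving the coboundary of `-(c ∘ h)`
    refine ⟨-(h n).dualMap c, ?_⟩
    simp only [LinearMap.dualMap_apply', hfh.2, LinearMap.comp_sub, LinearMap.comp_id,
      ← LinearMap.comp_assoc, hc, LinearMap.zero_comp, LinearMap.neg_comp]
    abel

theorem cohomMap_eq_id (hfh : IsHomotopyToId dD f h) (hf : IsChainMap dD dD f) (q : ℕ) :
    cohomMap f hf q = LinearMap.id := by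
  ext ⟨c, hc⟩
  exact (Submodule.Quotient.eq _).2 (hfh.dualMap_sub_mem_cobnd hc)

end IsHomotopyToId

end DualCohomology

section RangeSubcomplex

variable {C : ℕ → Type*} [∀ n, AddCommGroup (C n)] [∀ n, Module ℤ (C n)]
  {d : ∀ n, C (n + 1) →ₗ[ℤ] C n} {π : ∀ n, C n →ₗ[ℤ] C n}

theorem IsHomotopyToId.isIdempotentElem {φ : ∀ n, C n →ₗ[ℤ] C (n + 1)}
    (hπφ : IsHomotopyToId d π φ) (hdd : ∀ n, (d n).comp (d (n + 1)) = 0)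
    (hφφ : ∀ n, (φ (n + 1)).comp (φ n) = 0) (hφdφ : ∀ n, (φ n).comp ((d n).comp (φ n)) = φ n)
    (n : ℕ) : IsIdempotentElem (π n) := by
  have hdd' n x : d n (d (n + 1) x) = 0 := LinearMap.congr_fun (hdd n) x
  have hφφ' n x : φ (n + 1) (φ n x) = 0 := LinearMap.congr_fun (hφφ n) x
  have hφdφ' n x : φ n (d n (φ n x)) = φ n x := LinearMap.congr_fun (hφdφ n) x
  ext x
  cases n with
  | zero => simp [hπφ.1, hφdφ']
  | succ n => simp [hπφ.2, hdd', hφφ', hφdφ']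

namespace IsChainMap

theorem map_mem_range (hπ : IsChainMap d d π) (q : ℕ) :
    ∀ x ∈ LinearMap.range (π (q + 1)), d q x ∈ LinearMap.range (π q) := by
  rintro _ ⟨y, rfl⟩
  exact ⟨d q y, LinearMap.congr_fun (hπ q) y⟩

theorem range_subtype (hπ : IsChainMap d d π) :
    IsChainMap (fun n => (d n).restrict (hπ.map_mem_range n)) d
      fun n => (LinearMap.range (π n)).subtype :=
  fun _ => rfl

theorem rangeRestrict (hπ : IsChainMap d d π) :
    IsChainMap d (fun n => (d n).restrict (hπ.map_mem_range n)) fun n => (π n).rangeRestrict := by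
  intro n
  ext x
  exact LinearMap.congr_fun (hπ n) x

def rangeDualCohomologyEquiv (hπ : IsChainMap d d π) (hidem : ∀ n, IsIdempotentElem (π n))
    {h : ∀ n, C n →ₗ[ℤ] C (n + 1)} (hπh : IsHomotopyToId d π h) (q : ℕ) :
    DualCohomology C d q ≃ₗ[ℤ]
      DualCohomology (fun n => LinearMap.range (π n))
        (fun n => (d n).restrict (hπ.map_mem_range n)) q :=
  LinearEquiv.ofLinearMap (cohomMap _ hπ.range_subtype q) (cohomMap _ hπ.rangeRestrict q)
    (by
      rw [cohomMap_comp hπ.range_subtype hπ.rangeRestrict isChainMap_id, cohomMap_id]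
      intro n
      ext ⟨_, y, rfl⟩
      exact LinearMap.congr_fun (hidem n) y)
    (by
      rw [cohomMap_comp hπ.rangeRestrict hπ.range_subtype hπ, hπh.cohomMap_eq_id]
      intro n
      rfl)

end IsChainMap

end RangeSubcomplex

/-- Let `φ` be an AM-chain-homotopy for a chain complex `C` of `ℤ`-modules,
`π` the associated family of maps, and `M` the subcomplex with `M_q = im π_q` and
differential the restriction of `∂` (whose existence is the assertion `hres`).  Then for
every `q`, the `q`-th cohomology `ker δ^q / im δ^{q−1}` of the cochain complex
`Hom_ℤ(C, ℤ)` is isomorphic to the `q`-th cohomology of `Hom_ℤ(M, ℤ)`. -/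
theorem am_homotopy_cohomology_iso_subcomplex
    (C : ℕ → Type*) [∀ n, AddCommGroup (C n)] [∀ n, Module ℤ (C n)]
    (d : ∀ n, C (n + 1) →ₗ[ℤ] C n)
    (hdd : ∀ n, (d n).comp (d (n + 1)) = 0)
    (φ : ∀ n, C n →ₗ[ℤ] C (n + 1))
    (hφφ : ∀ n, (φ (n + 1)).comp (φ n) = 0)
    (hφdφ : ∀ n, (φ n).comp ((d n).comp (φ n)) = φ n)
    (π : ∀ n, C n →ₗ[ℤ] C n)
    (hπ0 : π 0 = LinearMap.id - (d 0).comp (φ 0))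
    (hπ : ∀ n, π (n + 1) =
      LinearMap.id - (φ n).comp (d n) - (d (n + 1)).comp (φ (n + 1))) :
    ∃ hres : ∀ q, ∀ x ∈ LinearMap.range (π (q + 1)), d q x ∈ LinearMap.range (π q),
      ∀ q, Nonempty
        ((↥(cocyc C d q) ⧸ (cobnd C d q).comap (cocyc C d q).subtype) ≃ₗ[ℤ]
          (↥(cocyc (fun n => ↥(LinearMap.range (π n)))
                (fun n => (d n).restrict (hres n)) q) ⧸
            (cobnd (fun n => ↥(LinearMap.range (π n)))
                (fun n => (d n).restrict (hres n)) q).comap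
              (cocyc (fun n => ↥(LinearMap.range (π n)))
                (fun n => (d n).restrict (hres n)) q).subtype)) := by
  have hπφ : IsHomotopyToId d π φ := ⟨hπ0, hπ⟩
  have hπ_chain := hπφ.isChainMap hdd
  exact ⟨hπ_chain.map_mem_range, fun q =>
    ⟨hπ_chain.rangeDualCohomologyEquiv (hπφ.isIdempotentElem hdd hφφ hφdφ) hπφ q⟩⟩
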